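/- For pointed Kripke models (M,w) and (N,v) and a set Q of generalized modalities: if N,v satisfies the canonical Q-characteristic depth-d formula φ^{Q,d}_{M⊔N,w} of w computed in the disjoint union M⊔N, then Player 2 has a winning strategy in the d-round Q-bisimulation game on (M,w) and (N,v). -/

import Mathlib

/-- A Kripke model over proposition symbols `P` with node set `V`. -/
structure Kripke (P V : Type) where
  succ : V → Finset V
  label : V → P → Prop

/-- Formulas of `PL(𝒬)`: propositional logic extended with generalized modalities
indexed by `ι`. -/
inductive PLQ (P ι : Type) : Type
  | bot : PLQ P ι
  | prop : P → PLQ P ι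
  | neg : PLQ P ι → PLQ P ι
  | and : PLQ P ι → PLQ P ι → PLQ P ι
  | or : PLQ P ι → PLQ P ι → PLQ P ι
  | app : ι → PLQ P ι → PLQ P ι

/-- Modal depth of a `PL(𝒬)` formula. -/
def PLQ.md {P ι : Type} : PLQ P ι → ℕ
  | .bot => 0
  | .prop _ => 0
  | .neg φ => φ.md
  | .and φ ψ => max φ.md ψ.md
  | .or φ ψ => max φ.md ψ.md
  | .app _ φ => φ.md + 1

/-- Satisfaction of `PL(𝒬)` formulas. A generalized quantifier is an
isomorphism-closed class of structures `(D, P)` with `P ⊆ D`, so it is determined by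
the pair of cardinalities `(|D|, |P|)`; accordingly the family `𝒬` is given as
`Q : ι → ℕ → ℕ → Prop`, and `M,v ⊨ ⟨Q i⟩φ` iff
`(N(v), {u ∈ N(v) : M,u ⊨ φ}) ∈ Q i`, i.e. `Q i |N(v)| |{u ∈ N(v) : M,u ⊨ φ}|`. -/
def Kripke.SatQ {P V ι : Type} (M : Kripke P V) (Q : ι → ℕ → ℕ → Prop) :
    PLQ P ι → V → Prop
  | .bot, _ => False
  | .prop p, v => M.label v p
  | .neg φ, v => ¬ M.SatQ Q φ v
  | .and φ ψ, v => M.SatQ Q φ v ∧ M.SatQ Q ψ v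
  | .or φ ψ, v => M.SatQ Q φ v ∨ M.SatQ Q ψ v
  | .app i φ, v => Q i (M.succ v).card {u | u ∈ M.succ v ∧ M.SatQ Q φ u}.ncard

/-- Disjoint union `M ⊔ N` of two Kripke models. -/
def Kripke.sum {P V W : Type} (M : Kripke P V) (N : Kripke P W) : Kripke P (V ⊕ W) where
  succ := fun x => match x with
    | .inl a => (M.succ a).map ⟨Sum.inl, Sum.inl_injective⟩
    | .inr b => (N.succ b).map ⟨Sum.inr, Sum.inr_injective⟩
  label := fun x p => match x with
    | .inl a => M.label a p
    | .inr b => N.label b p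

/-- `AttWin K Q d a b` : the player currently in the attacker role has a winning
strategy in the `d`-round `𝒬`-bisimulation game from position `(a, b)` (both pebbles on
nodes of the single model `K`, e.g. a disjoint union). The attacker wins immediately if
the pebbled nodes disagree on a proposition symbol; otherwise the attacker selects a
pebble `u` (the other being `v`), a modality `⟨Q i⟩`, a set `X ⊆ N(u)` with
`(N(u),X) ∈ Q i`, and a set `P' ⊆ N(v)`; the defender may contest `X` or `P'`
(moving the pebbles as prescribed), or reply with `X' ⊆ N(v)` with `(N(v),X') ∈ Q i`
and `P' ⊆ X'`, after which the attacker may contest `X'` (becoming the defender), move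
to `N(v) \ X'` × `X` (becoming the defender), or move one pebble into `X'` with the
defender answering in `X ∪ P'`. (By determinacy of this finite game, the defender,
i.e. Player 2, has a winning strategy iff `AttWin` fails.) -/
def AttWin {P V ι : Type} [DecidableEq V] (K : Kripke P V) (Q : ι → ℕ → ℕ → Prop) :
    ℕ → V → V → Prop
  | 0, a, b => ¬ ∀ p, K.label a p ↔ K.label b p
  | (d+1), a, b => (¬ ∀ p, K.label a p ↔ K.label b p) ∨
      ∃ u v : V, ((u, v) = (a, b) ∨ (u, v) = (b, a)) ∧
      ∃ (i : ι) (X P' : Finset V), X ⊆ K.succ u ∧ Q i (K.succ u).card X.card ∧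
        P' ⊆ K.succ v ∧
        (∀ x ∈ X, ∀ y ∈ K.succ u \ X, AttWin K Q d x y) ∧
        (∀ y ∈ P', ∀ x ∈ K.succ u, AttWin K Q d x y) ∧
        (∀ X' : Finset V, X' ⊆ K.succ v → Q i (K.succ v).card X'.card → P' ⊆ X' →
          (∃ y ∈ X', ∃ z ∈ K.succ v \ X', ¬ AttWin K Q d y z) ∨
          (∃ y ∈ K.succ v \ X', ∃ x ∈ X, ¬ AttWin K Q d x y) ∨
          (∃ y ∈ X', ∀ x, (x ∈ X ∨ x ∈ P') → AttWin K Q d x y))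

/-- `Player 2 (the defender) has a winning strategy in the `d`-round `𝒬`-bisimulation
game from position `(a,b)` (via determinacy of the finite game). -/
def DefWin {P V ι : Type} [DecidableEq V] (K : Kripke P V) (Q : ι → ℕ → ℕ → Prop)
    (d : ℕ) (a b : V) : Prop := ¬ AttWin K Q d a b

/-- `CharSat K Q d w v` : `v` satisfies the canonical `𝒬`-characteristic depth-`d`
formula `φ^{𝒬,d}_{K,w}` of `w`. At depth 0 this is the full propositional agreement
with `w`; at depth `d+1` it additionally requires, for every modality `⟨Q i⟩` and every
set `C` of depth-`d` characteristic formulas of nodes of `K` (encoded by the set `S` of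
nodes whose characteristic formulas constitute `C`, so that a node `u` satisfies `⋁C`
iff `∃ x ∈ S, CharSat K Q d x u`), that `⟨Q i⟩(⋁C)` holds at `v` iff it holds at `w`. -/
def CharSat {P V ι : Type} (K : Kripke P V) (Q : ι → ℕ → ℕ → Prop) :
    ℕ → V → V → Prop
  | 0, w, v => ∀ p, K.label w p ↔ K.label v p
  | (d+1), w, v => (∀ p, K.label w p ↔ K.label v p) ∧
      ∀ (i : ι) (S : Set V),
        (Q i (K.succ w).card
            {u | u ∈ K.succ w ∧ ∃ x ∈ S, CharSat K Q d x u}.ncard ↔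
         Q i (K.succ v).card
            {u | u ∈ K.succ v ∧ ∃ x ∈ S, CharSat K Q d x u}.ncard)

/-!
The depth-`d` characteristic formulas of `K` are the classes of the equivalence relation
`CharSat K Q d`, and a disjunction `⋁C` of them is the union of the classes of a set `S` of nodes.
By induction on `d`, the attacker wins the `d`-round game from `(a, b)` exactly when
`CharSat K Q d a b` fails. For the step, once the attacker's `d`-round wins are known to be the
pairs of inequivalent nodes, a `Q i`-move from `u` against `v` amounts to a union of classes
`⋁C` with `⟨Q i⟩⋁C` true at `u` and false at `v`: given such a `C`, the attacker plays the
`C`-part of `N(u)` together with the `C`-nodes of `N(v)` without a partner in `N(u)`; conversely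
the defender answers a move `X, P'` by the `C`-part of `N(v)`, for `C` the classes of `X ∪ P'`.
-/

theorem Set.ncard_setOf_mem_and {α : Type*} (s : Finset α) (p : α → Prop) [DecidablePred p] :
    {x | x ∈ s ∧ p x}.ncard = (s.filter p).card := by
  rw [← Set.ncard_coe_finset, Finset.coe_filter]

namespace Kripke

variable {P V ι : Type} (K : Kripke P V) (Q : ι → ℕ → ℕ → Prop)

/-- `⟨Q i⟩(⋁C)` holds at `u`, where `⋁C` is the union of the `E`-classes of the nodes in `S`. -/
def QHolds (E : V → V → Prop) (i : ι) (S : Set V) (u : V) : Prop :=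
  Q i (K.succ u).card {z | z ∈ K.succ u ∧ ∃ x ∈ S, E x z}.ncard

/-- The attacker's move from `u` against `v` in one round of the game, when `R x y` means that
the attacker wins the remaining rounds from `(x, y)`. -/
def AttackerMove [DecidableEq V] (R : V → V → Prop) (u v : V) : Prop :=
  ∃ (i : ι) (X P' : Finset V), X ⊆ K.succ u ∧ Q i (K.succ u).card X.card ∧
    P' ⊆ K.succ v ∧
    (∀ x ∈ X, ∀ y ∈ K.succ u \ X, R x y) ∧
    (∀ y ∈ P', ∀ x ∈ K.succ u, R x y) ∧
    (∀ X' : Finset V, X' ⊆ K.succ v → Q i (K.succ v).card X'.card → P' ⊆ X' →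
      (∃ y ∈ X', ∃ z ∈ K.succ v \ X', ¬ R y z) ∨
      (∃ y ∈ K.succ v \ X', ∃ x ∈ X, ¬ R x y) ∨
      (∃ y ∈ X', ∀ x, (x ∈ X ∨ x ∈ P') → R x y))

variable {K Q} {E : V → V → Prop}

theorem not_attackerMove_of_qHolds_imp [DecidableEq V] (hE : Equivalence E) {u v : V}
    (h : ∀ i S, K.QHolds Q E i S u → K.QHolds Q E i S v) :
    ¬ K.AttackerMove Q (fun x y => ¬ E x y) u v := by
  classical
  rintro ⟨i, X, P', hXu, hQX, hP'v, hXclosed, hP'new, hreply⟩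
  set S : Set V := ↑X ∪ ↑P'
  have hsat_u : {z | z ∈ K.succ u ∧ ∃ x ∈ S, E x z} = ↑X := by
    ext z
    refine ⟨?_, fun hz => ⟨hXu hz, z, Or.inl hz, hE.refl z⟩⟩
    rintro ⟨hzu, x, hx | hx, hxz⟩
    · by_contra hzX
      exact hXclosed x hx z (Finset.mem_sdiff.2 ⟨hzu, hzX⟩) hxz
    · exact absurd (hE.symm hxz) (hP'new x hx z hzu)
  have hQv := h i S (by rwa [QHolds, hsat_u, Set.ncard_coe_finset])
  rw [QHolds, Set.ncard_setOf_mem_and] at hQv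
  set X' := (K.succ v).filter fun z => ∃ x ∈ S, E x z
  have hP'X' : P' ⊆ X' := fun y hy =>
    Finset.mem_filter.2 ⟨hP'v hy, y, Or.inr hy, hE.refl y⟩
  rcases hreply X' (Finset.filter_subset _ _) hQv hP'X' with
    ⟨y, hy, z, hz, hyz⟩ | ⟨y, hy, x, hx, hxy⟩ | ⟨y, hy, hfar⟩
  · obtain ⟨-, s, hs, hsy⟩ := Finset.mem_filter.1 hy
    obtain ⟨hzv, hzX'⟩ := Finset.mem_sdiff.1 hz
    exact hzX' (Finset.mem_filter.2 ⟨hzv, s, hs, hE.trans hsy (not_not.1 hyz)⟩)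
  · obtain ⟨hyv, hyX'⟩ := Finset.mem_sdiff.1 hy
    exact hyX' (Finset.mem_filter.2 ⟨hyv, x, Or.inl hx, not_not.1 hxy⟩)
  · obtain ⟨-, s, hs, hsy⟩ := Finset.mem_filter.1 hy
    exact hfar s hs hsy

theorem attackerMove_of_qHolds_of_not_qHolds [DecidableEq V] (hE : Equivalence E)
    {u v : V} {i : ι} {S : Set V} (hu : K.QHolds Q E i S u) (hv : ¬ K.QHolds Q E i S v) :
    K.AttackerMove Q (fun x y => ¬ E x y) u v := by
  classical
  rw [QHolds, Set.ncard_setOf_mem_and] at hu hv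
  set X := (K.succ u).filter fun z => ∃ x ∈ S, E x z
  set Y := (K.succ v).filter fun z => ∃ x ∈ S, E x z
  set P' := (K.succ v).filter fun y => (∃ x ∈ S, E x y) ∧ ∀ z ∈ K.succ u, ¬ E z y
  refine ⟨i, X, P', Finset.filter_subset _ _, hu, Finset.filter_subset _ _, ?_, ?_, ?_⟩
  · intro x hx y hy hxy
    obtain ⟨-, s, hs, hsx⟩ := Finset.mem_filter.1 hx
    obtain ⟨hyu, hyX⟩ := Finset.mem_sdiff.1 hy
    exact hyX (Finset.mem_filter.2 ⟨hyu, s, hs, hE.trans hsx hxy⟩)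
  · intro y hy x hx
    exact (Finset.mem_filter.1 hy).2.2 x hx
  · intro X' hX'v hQX' hP'X'
    obtain ⟨y, hyY, hyX'⟩ | ⟨y, hyX', hyY⟩ : (∃ y ∈ Y, y ∉ X') ∨ ∃ y ∈ X', y ∉ Y := by
      by_contra! hsame
      exact hv (Finset.Subset.antisymm hsame.2 hsame.1 ▸ hQX')
    · obtain ⟨hyv, s, hs, hsy⟩ := Finset.mem_filter.1 hyY
      have : ∃ z ∈ K.succ u, E z y := by
        by_contra! hnew
        exact hyX' (hP'X' (Finset.mem_filter.2 ⟨hyv, ⟨s, hs, hsy⟩, hnew⟩))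
      obtain ⟨z, hzu, hzy⟩ := this
      have hzX : z ∈ X := Finset.mem_filter.2 ⟨hzu, s, hs, hE.trans hsy (hE.symm hzy)⟩
      exact Or.inr (Or.inl ⟨y, Finset.mem_sdiff.2 ⟨hyv, hyX'⟩, z, hzX, not_not.2 hzy⟩)
    · refine Or.inr (Or.inr ⟨y, hyX', fun x hx hxy => hyY ?_⟩)
      obtain ⟨s, hs, hsx⟩ : ∃ s ∈ S, E s x := by
        rcases hx with hx | hx
        · exact (Finset.mem_filter.1 hx).2
        · exact (Finset.mem_filter.1 hx).2.1
      exact Finset.mem_filter.2 ⟨hX'v hyX', s, hs, hE.trans hsx hxy⟩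

end Kripke

section Game

variable {P V ι : Type} (K : Kripke P V) (Q : ι → ℕ → ℕ → Prop)

theorem charSat_equivalence (d : ℕ) : Equivalence (CharSat K Q d) := by
  cases d with
  | zero => exact ⟨fun _ _ => Iff.rfl, fun h p => (h p).symm, fun h h' p => (h p).trans (h' p)⟩
  | succ d =>
    exact ⟨fun _ => ⟨fun _ => Iff.rfl, fun _ _ => Iff.rfl⟩,
      fun h => ⟨fun p => (h.1 p).symm, fun i S => (h.2 i S).symm⟩,
      fun h h' => ⟨fun p => (h.1 p).trans (h'.1 p), fun i S => (h.2 i S).trans (h'.2 i S)⟩⟩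

theorem charSat_succ_iff {d : ℕ} {a b : V} :
    CharSat K Q (d + 1) a b ↔ (∀ p, K.label a p ↔ K.label b p) ∧
      ∀ i S, K.QHolds Q (CharSat K Q d) i S a ↔ K.QHolds Q (CharSat K Q d) i S b :=
  Iff.rfl

theorem attWin_succ_iff [DecidableEq V] {d : ℕ} {a b : V} :
    AttWin K Q (d + 1) a b ↔ (¬ ∀ p, K.label a p ↔ K.label b p) ∨
      ∃ u v : V, ((u, v) = (a, b) ∨ (u, v) = (b, a)) ∧ K.AttackerMove Q (AttWin K Q d) u v :=
  Iff.rfl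

theorem attWin_iff_not_charSat [DecidableEq V] (d : ℕ) (a b : V) :
    AttWin K Q d a b ↔ ¬ CharSat K Q d a b := by
  induction d generalizing a b with
  | zero => exact Iff.rfl
  | succ d ih =>
    have hE := charSat_equivalence K Q d
    have hR : AttWin K Q d = fun x y => ¬ CharSat K Q d x y := by
      funext x y
      exact propext (ih x y)
    rw [attWin_succ_iff, hR, charSat_succ_iff]
    constructor
    · rintro (hlab | ⟨u, v, huv | huv, hmove⟩) hab
      · exact hlab hab.1
      · obtain ⟨rfl, rfl⟩ := Prod.mk.inj huv
        exact Kripke.not_attackerMove_of_qHolds_imp hE (fun i S => (hab.2 i S).1) hmove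
      · obtain ⟨rfl, rfl⟩ := Prod.mk.inj huv
        exact Kripke.not_attackerMove_of_qHolds_imp hE (fun i S => (hab.2 i S).2) hmove
    · intro hab
      by_cases hlab : ∀ p, K.label a p ↔ K.label b p
      · obtain ⟨i, S, hiS⟩ : ∃ i S, ¬ (K.QHolds Q (CharSat K Q d) i S a ↔
            K.QHolds Q (CharSat K Q d) i S b) := by
          by_contra! h
          exact hab ⟨hlab, h⟩
        refine Or.inr ?_
        by_cases ha : K.QHolds Q (CharSat K Q d) i S a
        · have hb := fun hb => (not_iff.1 hiS).2 hb ha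
          exact ⟨a, b, Or.inl rfl, Kripke.attackerMove_of_qHolds_of_not_qHolds hE ha hb⟩
        · have hb := (not_iff.1 hiS).1 ha
          exact ⟨b, a, Or.inr rfl, Kripke.attackerMove_of_qHolds_of_not_qHolds hE hb ha⟩
      · exact Or.inl hlab

end Game

theorem charSat_implies_defender_win_general
    {P V W ι : Type} [DecidableEq V] [DecidableEq W]
    (M : Kripke P V) (N : Kripke P W) (Q : ι → ℕ → ℕ → Prop) (w : V) (v : W) (d : ℕ)
    (h : CharSat (M.sum N) Q d (Sum.inl w) (Sum.inr v)) :
    DefWin (M.sum N) Q d (Sum.inl w) (Sum.inr v) :=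
  fun hA => (attWin_iff_not_charSat (M.sum N) Q d _ _).1 hA h

/-- if `N,v` satisfies the canonical `𝒬`-characteristic depth-`d` formula
`φ^{𝒬,d}_{M⊔N,w}` of `w` computed in the disjoint union `M ⊔ N`, then Player 2 (the
defender) has a winning strategy in the `d`-round `𝒬`-bisimulation game on `(M,w)` and
`(N,v)`. -/
theorem charSat_implies_defender_win
    {P V W ι : Type} [Fintype V] [Fintype W] [DecidableEq V] [DecidableEq W]
    (M : Kripke P V) (N : Kripke P W) (Q : ι → ℕ → ℕ → Prop) (w : V) (v : W) (d : ℕ)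
    (h : CharSat (M.sum N) Q d (Sum.inl w) (Sum.inr v)) :
    DefWin (M.sum N) Q d (Sum.inl w) (Sum.inr v) :=
  charSat_implies_defender_win_general M N Q w v d h
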